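/- Let G be a group with elements σ₁, …, σ_k satisfying the braid relations, with δ_n = σ_n ⋯ σ₁ and γ_n = σ₁ ⋯ σ_n. Then for k ≥ 2, δ_k^k = δ_{k−1}^{k−1} · σ_k · δ_{k−1} · γ_{k−2} · σ_{k−1}. -/
import Mathlib


/-- `deltaB σ n = σ n * σ (n-1) * ... * σ 1` (with `deltaB σ 0 = 1`). -/
def deltaB {G : Type*} [Group G] (σ : ℕ → G) (n : ℕ) : G :=
  ((List.range n).map (fun i => σ (n - i))).prod

/-- `gammaB σ n = σ 1 * σ 2 * ... * σ n` (with `gammaB σ 0 = 1`). -/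
def gammaB {G : Type*} [Group G] (σ : ℕ → G) (n : ℕ) : G :=
  ((List.range n).map (fun i => σ (i + 1))).prod

/-- `ascB σ a c = σ a * σ (a+1) * ... * σ (a+c)`. -/
def ascB {G : Type*} [Group G] (σ : ℕ → G) (a c : ℕ) : G :=
  ((List.range (c + 1)).map (fun i => σ (a + i))).prod

section Aux

variable {G : Type*} [Group G] (σ : ℕ → G)

lemma deltaB_zero : deltaB σ 0 = 1 := rfl

lemma deltaB_succ (n : ℕ) : deltaB σ (n + 1) = σ (n + 1) * deltaB σ n := by
  simp only [deltaB, List.range_succ_eq_map, List.map_cons, List.prod_cons,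
    List.map_map, Nat.sub_zero]
  congr 1
  refine congrArg List.prod (List.map_congr_left fun i hi => ?_)
  simp [Function.comp, Nat.succ_sub_succ]

lemma gammaB_succ (n : ℕ) : gammaB σ (n + 1) = gammaB σ n * σ (n + 1) := by
  simp [gammaB, List.range_succ]

lemma ascB_zero (a : ℕ) : ascB σ a 0 = σ a := by
  simp [ascB, List.range_succ]

lemma ascB_cons (a c : ℕ) : ascB σ a (c + 1) = σ a * ascB σ (a + 1) c := by
  unfold ascB
  rw [List.range_succ_eq_map, List.map_cons, List.prod_cons, List.map_map]
  congr 1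
  refine congrArg List.prod (List.map_congr_left fun i hi => ?_)
  simp only [Function.comp_apply]
  congr 1
  omega

lemma gammaB_eq_ascB (n : ℕ) : gammaB σ (n + 1) = ascB σ 1 n := by
  simp only [gammaB, ascB]
  refine congrArg List.prod (List.map_congr_left fun i hi => ?_)
  congr 1
  omega

variable (k : ℕ)

/-- σ m commutes with deltaB σ j when j + 1 < m ≤ k. -/
lemma lemC (hcomm : ∀ i j, 1 ≤ i → i + 1 < j → j ≤ k → σ i * σ j = σ j * σ i) :
    ∀ j m, j + 1 < m → m ≤ k → Commute (σ m) (deltaB σ j) := by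
  intro j
  induction j with
  | zero => intro m _ _; rw [deltaB_zero]; exact Commute.one_right _
  | succ j ih =>
    intro m h1 h2
    rw [deltaB_succ]
    exact Commute.mul_right ((hcomm (j + 1) m (by omega) h1 h2).symm)
      (ih m (by omega) h2)

/-- σ m commutes with gammaB σ j when j + 1 < m ≤ k. -/
lemma lemCg (hcomm : ∀ i j, 1 ≤ i → i + 1 < j → j ≤ k → σ i * σ j = σ j * σ i) :
    ∀ j m, j + 1 < m → m ≤ k → Commute (σ m) (gammaB σ j) := by
  intro j
  induction j with
  | zero => intro m _ _; show Commute _ (1 : G); exact Commute.one_right _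
  | succ j ih =>
    intro m h1 h2
    rw [gammaB_succ]
    exact Commute.mul_right (ih m (by omega) h2)
      ((hcomm (j + 1) m (by omega) h1 h2).symm)

/-- shift lemma: σ i * δ n = δ n * σ (i+1) for 1 ≤ i < n ≤ k. -/
lemma lemS (hcomm : ∀ i j, 1 ≤ i → i + 1 < j → j ≤ k → σ i * σ j = σ j * σ i)
    (hbraid : ∀ i, 1 ≤ i → i + 1 ≤ k →
      σ i * σ (i + 1) * σ i = σ (i + 1) * σ i * σ (i + 1)) :
    ∀ n, n ≤ k → ∀ i, 1 ≤ i → i + 1 ≤ n →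
      σ i * deltaB σ n = deltaB σ n * σ (i + 1) := by
  intro n
  induction n with
  | zero => intro _ i _ h; omega
  | succ n ih =>
    intro hn i hi hin
    rcases Nat.lt_or_ge (i + 1) (n + 1) with hlt | hge
    · calc σ i * deltaB σ (n + 1)
          = σ i * σ (n + 1) * deltaB σ n := by rw [deltaB_succ, mul_assoc]
        _ = σ (n + 1) * (σ i * deltaB σ n) := by
            rw [hcomm i (n + 1) hi (by omega) hn, mul_assoc]
        _ = σ (n + 1) * (deltaB σ n * σ (i + 1)) := by
            rw [ih (by omega) i hi (by omega)]
        _ = deltaB σ (n + 1) * σ (i + 1) := by rw [deltaB_succ, mul_assoc]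
    · have hie : i = n := by omega
      subst hie
      obtain ⟨m, rfl⟩ : ∃ m, i = m + 1 := ⟨i - 1, by omega⟩
      have hc : Commute (σ (m + 2)) (deltaB σ m) :=
        lemC σ k hcomm m (m + 2) (by omega) hn
      have hbr : σ (m + 1) * σ (m + 2) * σ (m + 1)
          = σ (m + 2) * σ (m + 1) * σ (m + 2) :=
        hbraid (m + 1) (by omega) (by omega)
      have hd2 : deltaB σ (m + 2) = σ (m + 2) * deltaB σ (m + 1) :=
        deltaB_succ σ (m + 1)
      have hd1 : deltaB σ (m + 1) = σ (m + 1) * deltaB σ m := deltaB_succ σ m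
      show σ (m + 1) * deltaB σ (m + 2) = deltaB σ (m + 2) * σ (m + 2)
      calc σ (m + 1) * deltaB σ (m + 2)
          = σ (m + 1) * σ (m + 2) * σ (m + 1) * deltaB σ m := by
            rw [hd2, hd1]; group
        _ = σ (m + 2) * σ (m + 1) * σ (m + 2) * deltaB σ m := by rw [hbr]
        _ = σ (m + 2) * σ (m + 1) * (deltaB σ m * σ (m + 2)) := by
            rw [mul_assoc (σ (m + 2) * σ (m + 1)), hc.eq]
        _ = deltaB σ (m + 2) * σ (m + 2) := by rw [hd2, hd1]; group

/-- shift lemma for gamma: γ n * σ i = σ (i+1) * γ n for 1 ≤ i < n ≤ k. -/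
lemma lemSg (hcomm : ∀ i j, 1 ≤ i → i + 1 < j → j ≤ k → σ i * σ j = σ j * σ i)
    (hbraid : ∀ i, 1 ≤ i → i + 1 ≤ k →
      σ i * σ (i + 1) * σ i = σ (i + 1) * σ i * σ (i + 1)) :
    ∀ n, n ≤ k → ∀ i, 1 ≤ i → i + 1 ≤ n →
      gammaB σ n * σ i = σ (i + 1) * gammaB σ n := by
  intro n
  induction n with
  | zero => intro _ i _ h; omega
  | succ n ih =>
    intro hn i hi hin
    rcases Nat.lt_or_ge (i + 1) (n + 1) with hlt | hge
    · calc gammaB σ (n + 1) * σ i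
          = gammaB σ n * (σ (n + 1) * σ i) := by rw [gammaB_succ, mul_assoc]
        _ = gammaB σ n * σ i * σ (n + 1) := by
            rw [← hcomm i (n + 1) hi (by omega) hn, mul_assoc]
        _ = σ (i + 1) * gammaB σ n * σ (n + 1) := by
            rw [ih (by omega) i hi (by omega)]
        _ = σ (i + 1) * gammaB σ (n + 1) := by rw [gammaB_succ, mul_assoc]
    · have hie : i = n := by omega
      subst hie
      obtain ⟨m, rfl⟩ : ∃ m, i = m + 1 := ⟨i - 1, by omega⟩
      have hc : Commute (σ (m + 2)) (gammaB σ m) :=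
        lemCg σ k hcomm m (m + 2) (by omega) hn
      have hbr : σ (m + 1) * σ (m + 2) * σ (m + 1)
          = σ (m + 2) * σ (m + 1) * σ (m + 2) :=
        hbraid (m + 1) (by omega) (by omega)
      have hg2 : gammaB σ (m + 2) = gammaB σ (m + 1) * σ (m + 2) :=
        gammaB_succ σ (m + 1)
      have hg1 : gammaB σ (m + 1) = gammaB σ m * σ (m + 1) := gammaB_succ σ m
      show gammaB σ (m + 2) * σ (m + 1) = σ (m + 2) * gammaB σ (m + 2)
      calc gammaB σ (m + 2) * σ (m + 1)
          = gammaB σ m * (σ (m + 1) * σ (m + 2) * σ (m + 1)) := by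
            rw [hg2, hg1]; group
        _ = gammaB σ m * (σ (m + 2) * σ (m + 1) * σ (m + 2)) := by rw [hbr]
        _ = σ (m + 2) * gammaB σ m * (σ (m + 1) * σ (m + 2)) := by
            rw [hc.eq]; group
        _ = σ (m + 2) * gammaB σ (m + 2) := by rw [hg2, hg1]; group

/-- δ_n * (σ_a ⋯ σ_n) = (σ_{a-1} ⋯ σ_n) * δ_{n-1}, with a = b+2, n = b+2+c. -/
lemma lemL (hcomm : ∀ i j, 1 ≤ i → i + 1 < j → j ≤ k → σ i * σ j = σ j * σ i)
    (hbraid : ∀ i, 1 ≤ i → i + 1 ≤ k →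
      σ i * σ (i + 1) * σ i = σ (i + 1) * σ i * σ (i + 1)) :
    ∀ c b, b + 2 + c ≤ k →
      deltaB σ (b + 2 + c) * ascB σ (b + 2) c
        = ascB σ (b + 1) (c + 1) * deltaB σ (b + 1 + c) := by
  intro c
  induction c with
  | zero =>
    intro b hb
    have hc : Commute (σ (b + 2)) (deltaB σ b) :=
      lemC σ k hcomm b (b + 2) (by omega) (by omega)
    have hbr : σ (b + 1) * σ (b + 2) * σ (b + 1)
        = σ (b + 2) * σ (b + 1) * σ (b + 2) :=
      hbraid (b + 1) (by omega) (by omega)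
    have hd2 : deltaB σ (b + 2) = σ (b + 2) * deltaB σ (b + 1) :=
      deltaB_succ σ (b + 1)
    have hd1 : deltaB σ (b + 1) = σ (b + 1) * deltaB σ b := deltaB_succ σ b
    have hac : ascB σ (b + 1) (0 + 1) = σ (b + 1) * ascB σ (b + 2) 0 :=
      ascB_cons σ (b + 1) 0
    have e1 : deltaB σ (b + 2 + 0) = deltaB σ (b + 2) := congrArg _ (by omega)
    have e2 : deltaB σ (b + 1 + 0) = deltaB σ (b + 1) := congrArg _ (by omega)
    rw [e1, e2, hac, ascB_zero]
    calc deltaB σ (b + 2) * σ (b + 2)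
        = σ (b + 2) * σ (b + 1) * (deltaB σ b * σ (b + 2)) := by
          rw [hd2, hd1]; group
      _ = σ (b + 2) * σ (b + 1) * (σ (b + 2) * deltaB σ b) := by rw [← hc.eq]
      _ = σ (b + 1) * σ (b + 2) * σ (b + 1) * deltaB σ b := by rw [hbr]; group
      _ = σ (b + 1) * σ (b + 2) * deltaB σ (b + 1) := by rw [hd1]; group
  | succ c ih =>
    intro b hb
    have key := ih (b + 1) (by omega)
    -- key : deltaB σ (b+1+2+c) * ascB σ (b+1+2) c
    --        = ascB σ (b+1+1) (c+1) * deltaB σ (b+1+1+c)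
    have e1 : deltaB σ (b + 2 + (c + 1)) = deltaB σ (b + 1 + 2 + c) :=
      congrArg _ (by omega)
    have e2 : deltaB σ (b + 1 + 1 + c) = deltaB σ (b + 1 + (c + 1)) :=
      congrArg _ (by omega)
    have e3 : ascB σ (b + 2 + 1) c = ascB σ (b + 1 + 2) c :=
      congrArg (fun x => ascB σ x c) (by omega)
    have hswap : deltaB σ (b + 1 + 2 + c) * σ (b + 2)
        = σ (b + 1) * deltaB σ (b + 1 + 2 + c) :=
      (lemS σ k hcomm hbraid (b + 1 + 2 + c) (by omega) (b + 1) (by omega)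
        (by omega)).symm
    have hco : ascB σ (b + 1) (c + 1 + 1) = σ (b + 1) * ascB σ (b + 1 + 1) (c + 1) :=
      ascB_cons σ (b + 1) (c + 1)
    calc deltaB σ (b + 2 + (c + 1)) * ascB σ (b + 2) (c + 1)
        = deltaB σ (b + 1 + 2 + c) * σ (b + 2) * ascB σ (b + 1 + 2) c := by
          rw [e1, ascB_cons σ (b + 2) c, e3]; group
      _ = σ (b + 1) * (deltaB σ (b + 1 + 2 + c) * ascB σ (b + 1 + 2) c) := by
          rw [hswap]; group
      _ = σ (b + 1) * (ascB σ (b + 1 + 1) (c + 1) * deltaB σ (b + 1 + 1 + c)) := by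
          rw [key]
      _ = ascB σ (b + 1) (c + 1 + 1) * deltaB σ (b + 1 + (c + 1)) := by
          rw [hco, e2]; group

/-- (δ_n)^m = (σ_{n-m+1} ⋯ σ_n) * (δ_{n-1})^m with m = p+1, n = p+1+d. -/
lemma lemM (hcomm : ∀ i j, 1 ≤ i → i + 1 < j → j ≤ k → σ i * σ j = σ j * σ i)
    (hbraid : ∀ i, 1 ≤ i → i + 1 ≤ k →
      σ i * σ (i + 1) * σ i = σ (i + 1) * σ i * σ (i + 1)) :
    ∀ p d, p + 1 + d ≤ k →
      (deltaB σ (p + 1 + d)) ^ (p + 1)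
        = ascB σ (d + 1) p * (deltaB σ (p + d)) ^ (p + 1) := by
  intro p
  induction p with
  | zero =>
    intro d hd
    simp only [Nat.zero_add, pow_one, ascB_zero]
    have e1 : deltaB σ (1 + d) = deltaB σ (d + 1) := congrArg _ (by omega)
    rw [e1, deltaB_succ]
  | succ p ih =>
    intro d hd
    have key := ih (d + 1) (by omega)
    have e1 : deltaB σ (p + 1 + (d + 1)) = deltaB σ (p + 1 + 1 + d) :=
      congrArg _ (by omega)
    have e2 : deltaB σ (p + (d + 1)) = deltaB σ (p + 1 + d) := congrArg _ (by omega)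
    rw [e1, e2] at key
    -- key : deltaB σ (p+1+1+d) ^ (p+1) = ascB σ (d+1+1) p * deltaB σ (p+1+d) ^ (p+1)
    have hL := lemL σ k hcomm hbraid p d (by omega)
    have e3 : deltaB σ (d + 2 + p) = deltaB σ (p + 1 + 1 + d) := congrArg _ (by omega)
    have e4 : ascB σ (d + 2) p = ascB σ (d + 1 + 1) p :=
      congrArg (fun x => ascB σ x p) (by omega)
    have e5 : deltaB σ (d + 1 + p) = deltaB σ (p + 1 + d) := congrArg _ (by omega)
    rw [e3, e4, e5] at hL
    -- hL : deltaB σ (p+1+1+d) * ascB σ (d+1+1) p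
    --       = ascB σ (d+1) (p+1) * deltaB σ (p+1+d)
    calc deltaB σ (p + 1 + 1 + d) ^ (p + 1 + 1)
        = deltaB σ (p + 1 + 1 + d) * deltaB σ (p + 1 + 1 + d) ^ (p + 1) := by
          rw [pow_succ']
      _ = deltaB σ (p + 1 + 1 + d) * ascB σ (d + 1 + 1) p
            * deltaB σ (p + 1 + d) ^ (p + 1) := by rw [key]; group
      _ = ascB σ (d + 1) (p + 1) * deltaB σ (p + 1 + d)
            * deltaB σ (p + 1 + d) ^ (p + 1) := by rw [hL]
      _ = ascB σ (d + 1) (p + 1) * deltaB σ (p + 1 + d) ^ (p + 1 + 1) := by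
          rw [pow_succ' (deltaB σ (p + 1 + d)) (p + 1)]; group

/-- if x commutes with each σ i for 1 ≤ i ≤ j then it commutes with deltaB σ j. -/
lemma lemG (x : G) : ∀ j, (∀ i, 1 ≤ i → i ≤ j → Commute (σ i) x) →
    Commute (deltaB σ j) x := by
  intro j
  induction j with
  | zero => intro _; rw [deltaB_zero]; exact Commute.one_left _
  | succ j ih =>
    intro h
    rw [deltaB_succ]
    exact Commute.mul_left (h (j + 1) (by omega) (by omega))
      (ih fun i h1 h2 => h i h1 (by omega))

/-- δ_n γ_n commutes with σ i for 1 ≤ i < n ≤ k. -/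
lemma lemV (hcomm : ∀ i j, 1 ≤ i → i + 1 < j → j ≤ k → σ i * σ j = σ j * σ i)
    (hbraid : ∀ i, 1 ≤ i → i + 1 ≤ k →
      σ i * σ (i + 1) * σ i = σ (i + 1) * σ i * σ (i + 1)) :
    ∀ n, n ≤ k → ∀ i, 1 ≤ i → i + 1 ≤ n →
      Commute (σ i) (deltaB σ n * gammaB σ n) := by
  intro n hn i hi hin
  show σ i * (deltaB σ n * gammaB σ n) = deltaB σ n * gammaB σ n * σ i
  calc σ i * (deltaB σ n * gammaB σ n)
      = σ i * deltaB σ n * gammaB σ n := by rw [mul_assoc]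
    _ = deltaB σ n * (σ (i + 1) * gammaB σ n) := by
        rw [lemS σ k hcomm hbraid n hn i hi hin]; group
    _ = deltaB σ n * (gammaB σ n * σ i) := by
        rw [← lemSg σ k hcomm hbraid n hn i hi hin]
    _ = deltaB σ n * gammaB σ n * σ i := by rw [mul_assoc]

/-- δ_n^{n+1} = δ_{n-1}^n * (δ_n * γ_n) with n = q + 1 ≤ k. -/
lemma lemT (hcomm : ∀ i j, 1 ≤ i → i + 1 < j → j ≤ k → σ i * σ j = σ j * σ i)
    (hbraid : ∀ i, 1 ≤ i → i + 1 ≤ k →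
      σ i * σ (i + 1) * σ i = σ (i + 1) * σ i * σ (i + 1)) :
    ∀ q, q + 1 ≤ k →
      (deltaB σ (q + 1)) ^ (q + 1 + 1)
        = (deltaB σ q) ^ (q + 1) * (deltaB σ (q + 1) * gammaB σ (q + 1)) := by
  intro q hq
  have hM := lemM σ k hcomm hbraid q 0 (by omega)
  have e1 : deltaB σ (q + 1 + 0) = deltaB σ (q + 1) := congrArg _ (by omega)
  have e2 : deltaB σ (q + 0) = deltaB σ q := congrArg _ (by omega)
  have e3 : ascB σ (0 + 1) q = ascB σ 1 q :=
    congrArg (fun x => ascB σ x q) (by omega)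
  rw [e1, e2, e3, ← gammaB_eq_ascB] at hM
  -- hM : deltaB σ (q+1) ^ (q+1) = gammaB σ (q+1) * deltaB σ q ^ (q+1)
  have hcom : Commute (deltaB σ (q + 1) * gammaB σ (q + 1))
      ((deltaB σ q) ^ (q + 1)) := by
    refine Commute.pow_right ?_ _
    exact (lemG σ (deltaB σ (q + 1) * gammaB σ (q + 1)) q
      (fun i h1 h2 => lemV σ k hcomm hbraid (q + 1) hq i h1 (by omega))).symm
  calc (deltaB σ (q + 1)) ^ (q + 1 + 1)
      = deltaB σ (q + 1) * (deltaB σ (q + 1)) ^ (q + 1) := by rw [pow_succ']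
    _ = deltaB σ (q + 1) * gammaB σ (q + 1) * (deltaB σ q) ^ (q + 1) := by
        rw [hM]; group
    _ = (deltaB σ q) ^ (q + 1) * (deltaB σ (q + 1) * gammaB σ (q + 1)) := hcom.eq

end Aux

theorem stmt11 {G : Type*} [Group G] (σ : ℕ → G) (k : ℕ) (hk : 2 ≤ k)
    (hcomm : ∀ i j, 1 ≤ i → i + 1 < j → j ≤ k → σ i * σ j = σ j * σ i)
    (hbraid : ∀ i, 1 ≤ i → i + 1 ≤ k →
      σ i * σ (i + 1) * σ i = σ (i + 1) * σ i * σ (i + 1)) :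
    (deltaB σ k) ^ k =
      (deltaB σ (k - 1)) ^ (k - 1) * σ k * deltaB σ (k - 1) * gammaB σ (k - 2) *
        σ (k - 1) := by
  obtain ⟨m, rfl⟩ : ∃ m, k = m + 2 := ⟨k - 2, by omega⟩
  rw [show m + 2 - 1 = m + 1 from by omega, show m + 2 - 2 = m from by omega]
  -- hL : δ_{m+2}^{m+2} = γ_{m+2} * δ_{m+1}^{m+2}
  have hL : (deltaB σ (m + 2)) ^ (m + 2)
      = gammaB σ (m + 2) * (deltaB σ (m + 1)) ^ (m + 2) := by
    have h := lemM σ (m + 2) hcomm hbraid (m + 1) 0 (by omega)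
    have e1 : deltaB σ (m + 1 + 1 + 0) = deltaB σ (m + 2) := congrArg _ (by omega)
    have e2 : deltaB σ (m + 1 + 0) = deltaB σ (m + 1) := congrArg _ (by omega)
    have e3 : ascB σ (0 + 1) (m + 1) = ascB σ 1 (m + 1) :=
      congrArg (fun x => ascB σ x (m + 1)) (by omega)
    rw [e1, e2, e3, ← gammaB_eq_ascB] at h
    exact h
  -- hT : δ_{m+1}^{m+2} = δ_m^{m+1} * (δ_{m+1} * γ_{m+1})
  have hT : (deltaB σ (m + 1)) ^ (m + 2)
      = (deltaB σ m) ^ (m + 1) * (deltaB σ (m + 1) * gammaB σ (m + 1)) :=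
    lemT σ (m + 2) hcomm hbraid m (by omega)
  -- σ (m+2) commutes with powers of δ_m
  have hc : Commute (σ (m + 2)) ((deltaB σ m) ^ (m + 1)) :=
    Commute.pow_right (lemC σ (m + 2) hcomm m (m + 2) (by omega) (by omega)) _
  -- hR : δ_{m+1}^{m+1} = γ_{m+1} * δ_m^{m+1}
  have hR : (deltaB σ (m + 1)) ^ (m + 1)
      = gammaB σ (m + 1) * (deltaB σ m) ^ (m + 1) := by
    have h := lemM σ (m + 2) hcomm hbraid m 0 (by omega)
    have e1 : deltaB σ (m + 1 + 0) = deltaB σ (m + 1) := congrArg _ (by omega)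
    have e2 : deltaB σ (m + 0) = deltaB σ m := congrArg _ (by omega)
    have e3 : ascB σ (0 + 1) m = ascB σ 1 m :=
      congrArg (fun x => ascB σ x m) (by omega)
    rw [e1, e2, e3, ← gammaB_eq_ascB] at h
    exact h
  have hg2 : gammaB σ (m + 2) = gammaB σ (m + 1) * σ (m + 2) :=
    gammaB_succ σ (m + 1)
  have hg1 : gammaB σ (m + 1) = gammaB σ m * σ (m + 1) := gammaB_succ σ m
  calc (deltaB σ (m + 2)) ^ (m + 2)
      = gammaB σ (m + 2) * (deltaB σ m) ^ (m + 1)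
          * (deltaB σ (m + 1) * gammaB σ (m + 1)) := by
        rw [hL, hT]; group
    _ = gammaB σ (m + 1) * (σ (m + 2) * (deltaB σ m) ^ (m + 1))
          * (deltaB σ (m + 1) * gammaB σ (m + 1)) := by
        rw [hg2]; group
    _ = gammaB σ (m + 1) * ((deltaB σ m) ^ (m + 1) * σ (m + 2))
          * (deltaB σ (m + 1) * gammaB σ (m + 1)) := by
        rw [hc.eq]
    _ = gammaB σ (m + 1) * (deltaB σ m) ^ (m + 1) * σ (m + 2)
          * deltaB σ (m + 1) * gammaB σ (m + 1) := by group
    _ = (deltaB σ (m + 1)) ^ (m + 1) * σ (m + 2) * deltaB σ (m + 1)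
          * gammaB σ (m + 1) := by rw [← hR]
    _ = (deltaB σ (m + 1)) ^ (m + 1) * σ (m + 2) * deltaB σ (m + 1)
          * gammaB σ m * σ (m + 1) := by rw [hg1]; group
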